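/- Let H = {0, 89, 178, 267, 356, 445, 534} ⊆ ℤ/623ℤ and let B = {0, 1, 5, 35, 61, 177, 345, 414} ⊆ ℤ/623ℤ. Then H is a subgroup of ℤ/623ℤ of order 7, and the eleven difference sets Δ(8ⁱ·B) for i = 0, 1, …, 10 are pairwise disjoint, each has cardinality 56, each is disjoint from H, and their union together with H \ {0} is (ℤ/623ℤ) \ {0}. -/

import Mathlib

set_option maxRecDepth 100000

/-- The set of differences `ΔB = {a - c : a, c ∈ B, a ≠ c}`. -/
def diffSet (B : Finset (ZMod 623)) : Finset (ZMod 623) :=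
  ((B ×ˢ B).filter fun p => p.1 ≠ p.2).image fun p => p.1 - p.2

/-- The subgroup block `H = {0, 89, 178, 267, 356, 445, 534}` of `ℤ/623ℤ`. -/
def Hblock : Finset (ZMod 623) := {0, 89, 178, 267, 356, 445, 534}

/-- The base block `B`. -/
def baseBlock : Finset (ZMod 623) := {0, 1, 5, 35, 61, 177, 345, 414}

/-- The dilates `8ⁱ · B` of the base block, for `i = 0, 1, …, 10`. -/
def dilate (i : Fin 11) : Finset (ZMod 623) :=
  baseBlock.image fun x => (8 : ZMod 623) ^ (i : ℕ) * x

/-- Explicit literal values of the difference sets. -/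
def DD : Fin 11 → Finset (ZMod 623)
  | 0 => {1, 4, 5, 26, 30, 34, 35, 56, 60, 61, 69, 116, 142, 168, 172, 176, 177, 209, 210, 214, 237, 244, 270, 278, 279, 283, 284, 310, 313, 339, 340, 344, 345, 353, 379, 386, 409, 413, 414, 446, 447, 451, 455, 481, 507, 554, 562, 563, 567, 588, 589, 593, 597, 618, 619, 622}
  | 1 => {8, 12, 27, 32, 40, 71, 83, 98, 110, 130, 135, 143, 157, 162, 170, 175, 189, 197, 208, 220, 228, 240, 260, 268, 272, 280, 291, 305, 318, 332, 343, 351, 355, 363, 383, 395, 403, 415, 426, 434, 448, 453, 461, 466, 480, 488, 493, 513, 525, 540, 552, 583, 591, 596, 611, 615}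
  | 2 => {10, 41, 45, 50, 51, 52, 55, 64, 96, 102, 109, 114, 154, 161, 164, 166, 205, 206, 211, 216, 252, 256, 257, 266, 275, 293, 303, 307, 316, 320, 330, 348, 357, 366, 367, 371, 407, 412, 417, 418, 457, 459, 462, 469, 509, 514, 521, 527, 559, 568, 571, 572, 573, 578, 582, 613}
  | 3 => {14, 36, 42, 66, 68, 80, 82, 111, 141, 145, 147, 148, 179, 181, 183, 187, 193, 207, 215, 221, 223, 229, 249, 259, 263, 289, 292, 295, 328, 331, 334, 360, 364, 374, 394, 400, 402, 408, 416, 430, 436, 440, 442, 444, 475, 476, 478, 482, 512, 541, 543, 555, 557, 581, 587, 609}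
  | 4 => {17, 33, 37, 62, 70, 79, 85, 86, 95, 101, 112, 118, 123, 132, 149, 156, 180, 186, 202, 203, 213, 218, 235, 250, 265, 287, 288, 298, 325, 335, 336, 358, 373, 388, 405, 410, 420, 421, 437, 443, 467, 474, 491, 500, 505, 511, 522, 528, 537, 538, 544, 553, 561, 586, 590, 606}
  | 5 => {2, 9, 11, 54, 57, 63, 65, 108, 125, 127, 131, 136, 137, 165, 185, 188, 190, 194, 196, 242, 245, 251, 253, 262, 264, 273, 296, 302, 321, 327, 350, 359, 361, 370, 372, 378, 381, 427, 429, 433, 435, 438, 458, 486, 487, 492, 496, 498, 515, 558, 560, 566, 569, 612, 614, 621}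
  | 6 => {16, 67, 72, 74, 76, 88, 91, 103, 119, 124, 139, 150, 155, 158, 167, 191, 198, 227, 230, 234, 241, 243, 246, 258, 274, 301, 306, 308, 315, 317, 322, 349, 365, 377, 380, 382, 389, 393, 396, 425, 432, 456, 465, 468, 473, 484, 499, 504, 520, 532, 535, 547, 549, 551, 556, 607}
  | 7 => {3, 6, 15, 18, 28, 29, 31, 44, 46, 47, 53, 59, 75, 81, 84, 87, 90, 99, 105, 128, 134, 195, 201, 254, 282, 285, 294, 300, 323, 329, 338, 341, 369, 422, 428, 489, 495, 518, 524, 533, 536, 539, 542, 548, 564, 570, 576, 577, 579, 592, 594, 595, 605, 608, 617, 620}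
  | 8 => {23, 24, 25, 48, 49, 73, 92, 97, 120, 140, 144, 151, 163, 169, 174, 199, 212, 217, 222, 224, 232, 236, 247, 248, 255, 261, 271, 309, 314, 352, 362, 368, 375, 376, 387, 391, 399, 401, 406, 411, 424, 449, 454, 460, 472, 479, 483, 503, 526, 531, 550, 574, 575, 598, 599, 600}
  | 9 => {13, 19, 20, 38, 39, 58, 77, 93, 94, 106, 107, 113, 115, 126, 133, 146, 153, 171, 173, 184, 192, 200, 219, 231, 239, 277, 286, 299, 324, 337, 346, 384, 392, 404, 423, 431, 439, 450, 452, 470, 477, 490, 497, 508, 510, 516, 517, 529, 530, 546, 565, 584, 585, 603, 604, 610}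
  | 10 => {7, 21, 22, 43, 78, 100, 104, 117, 121, 122, 129, 138, 152, 159, 160, 182, 204, 225, 226, 233, 238, 269, 276, 281, 290, 297, 304, 311, 312, 319, 326, 333, 342, 347, 354, 385, 390, 397, 398, 419, 441, 463, 464, 471, 485, 494, 501, 502, 506, 519, 523, 545, 580, 601, 602, 616}

lemma dE : ∀ i : Fin 11, diffSet (dilate i) = DD i := by decide +kernel

lemma dEf : (fun i => diffSet (dilate i)) = DD := funext dE

lemma h56 : ∀ i, (DD i).card = 56 := by decide +kernel

lemma hHd : ∀ i, DD i ∩ Hblock = ∅ := by decide +kernel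

lemma hdd : ∀ i j : Fin 11, i < j → DD i ∩ DD j = ∅ := by decide +kernel

lemma ddisj : ∀ i j : Fin 11, i ≠ j → Disjoint (DD i) (DD j) := by
  intro i j h
  rcases h.lt_or_gt with h' | h'
  · exact Finset.disjoint_iff_inter_eq_empty.2 (hdd i j h')
  · exact (Finset.disjoint_iff_inter_eq_empty.2 (hdd j i h')).symm

lemma hHdisj : ∀ i, Disjoint (DD i) Hblock :=
  fun i => Finset.disjoint_iff_inter_eq_empty.2 (hHd i)

lemma hneg : Hblock.image (fun a => -a) = Hblock := by decide

lemma hadd : ((Hblock ×ˢ Hblock).image fun p => p.1 + p.2) = Hblock := by decide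

def Hsub : AddSubgroup (ZMod 623) where
  carrier := ↑Hblock
  zero_mem' := by decide
  add_mem' := fun {a b} ha hb => by
    have : a + b ∈ Hblock := hadd ▸ Finset.mem_image.2
      ⟨(a, b), Finset.mem_product.2 ⟨ha, hb⟩, rfl⟩
    exact this
  neg_mem' := fun {a} ha => by
    have : -a ∈ Hblock := hneg ▸ Finset.mem_image_of_mem _ ha
    exact this

lemma union_eq :
    (Hblock \ {0}) ∪ (Finset.univ.biUnion DD) = Finset.univ \ {0} := by
  have h0H : (0 : ZMod 623) ∈ Hblock := by decide
  apply Finset.eq_of_subset_of_card_le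
  · intro x hx
    rw [Finset.mem_sdiff, Finset.mem_singleton]
    refine ⟨Finset.mem_univ _, ?_⟩
    rcases Finset.mem_union.1 hx with hx | hx
    · rw [Finset.mem_sdiff, Finset.mem_singleton] at hx
      exact hx.2
    · obtain ⟨i, _, hxi⟩ := Finset.mem_biUnion.1 hx
      intro h; subst h
      exact Finset.disjoint_left.1 (hHdisj i) hxi h0H
  · have hcardB : (Finset.univ.biUnion DD).card = 616 := by
      rw [Finset.card_biUnion (fun i _ j _ h => ddisj i j h)]
      simp [h56]
    have hdisjU : Disjoint (Hblock \ {0}) (Finset.univ.biUnion DD) := by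
      rw [Finset.disjoint_biUnion_right]
      intro i _
      exact (Finset.disjoint_of_subset_left Finset.sdiff_subset (hHdisj i).symm)
    rw [Finset.card_union_of_disjoint hdisjU, hcardB]
    have h1 : (Hblock \ {0}).card = 6 := by decide
    have h2 : (Finset.univ \ ({0} : Finset (ZMod 623))).card = 622 := by
      rw [Finset.card_sdiff_of_subset (Finset.singleton_subset_iff.2 (Finset.mem_univ _)),
        Finset.card_singleton, Finset.card_univ, ZMod.card]
    rw [h1, h2]

/-- `H` is a subgroup of `ℤ/623ℤ` of order `7`, and the eleven difference sets
`Δ(8ⁱ · B)`, `i = 0, …, 10`, are pairwise disjoint, each has cardinality `56`,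
each is disjoint from `H`, and their union together with `H \ {0}` is
`ℤ/623ℤ \ {0}`. -/
theorem one_rotational_difference_family_zmod_623_17 :
    (∃ S : AddSubgroup (ZMod 623), (S : Set (ZMod 623)) = (Hblock : Set (ZMod 623))) ∧
    Hblock.card = 7 ∧
    (∀ i j, i ≠ j → Disjoint (diffSet (dilate i)) (diffSet (dilate j))) ∧
    (∀ i, (diffSet (dilate i)).card = 56) ∧
    (∀ i, Disjoint (diffSet (dilate i)) Hblock) ∧
    (Hblock \ {0}) ∪ (Finset.univ.biUnion fun i => diffSet (dilate i)) =
      Finset.univ \ {0} := by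
  refine ⟨⟨Hsub, rfl⟩, by decide,
    fun i j h => by rw [dE i, dE j]; exact ddisj i j h,
    fun i => by rw [dE i]; exact h56 i,
    fun i => by rw [dE i]; exact hHdisj i,
    by rw [dEf]; exact union_eq⟩
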